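/- The number of multi-Catalan tableaux of size n with r A's on the diagonal, counted with α=β=1, equals (2(r+1)/(n+r+2)) * binomial(2n+1, n-r). -/

import Mathlib

/-
Deleting the top row and the last column of a tableau of size `n + 1` leaves a tableau of size
`n`, and conversely the admissible top rows over a tableau `F` are determined by their diagonal
letter and, when it is `α`, by the position of their single `β`. Call a column of `F` open if its
diagonal letter is `β` and it holds no `α`. If `F` has `k` open columns, there is exactly one top
row with diagonal `β` (leaving `k + 1` open columns), exactly one with diagonal `x` (leaving none,
and adding an `A`), and for each `m ≤ k` exactly one with diagonal `α` leaving `m` open columns.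
So the number `T(n, r, m)` of tableaux with `r` letters `A` and `m` open columns satisfies
`T(n+1, r, m+1) = T(n, r, m) + T(n, r, ≥ m+1)` and
`T(n+1, r, 0) = T(n, r-1, ≥ 0) + T(n, r, ≥ 0)` (first term absent for `r = 0`), which Pascal's
rule solves by the ballot numbers `T(n, r, m) = C(2n-m, n+r) - C(2n-m, n+r+1)`. Summing over `m`
telescopes to `C(2n+1, n+r+1) - C(2n+1, n+r+2)`, which is the claimed formula.
-/

inductive MSym : Type
  | a | b | x
deriving DecidableEq

inductive Letter : Type
  | D | E | A
deriving DecidableEq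

/-- The content of the diagonal box of row `i` in a staircase filling of size `n`
(boxes `(i, j)` with `i + j < n`; the diagonal box of row `i` is `(i, n-1-i)`). -/
def diagRow (n : ℕ) (F : Fin n → Fin n → Option MSym) (i : Fin n) : Option MSym :=
  F i ⟨n - 1 - (i : ℕ), by have := i.isLt; omega⟩

def diagCol (n : ℕ) (F : Fin n → Fin n → Option MSym) (j : Fin n) : Option MSym :=
  F ⟨n - 1 - (j : ℕ), by have := j.isLt; omega⟩ j

/-- A box is forced to be empty if there is a `β` to its right in its row or an `α`
below it in its column. -/
def ForcedEmpty (n : ℕ) (F : Fin n → Fin n → Option MSym) (i j : Fin n) : Prop :=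
  (∃ j' : Fin n, j < j' ∧ F i j' = some MSym.b) ∨ (∃ i' : Fin n, i < i' ∧ F i' j = some MSym.a)

/-- A multi-Catalan tableau of size `n`: every box on the diagonal is filled (α, β or x);
a box left of a β in its row or above an α in its column is empty; a non-forced box in a
D-row and E-column contains α or β; in a D-row and A-column contains β; in an A-row and
E-column contains α; every other box is empty. -/
def IsMCT (n : ℕ) (F : Fin n → Fin n → Option MSym) : Prop :=
  (∀ i j : Fin n, n ≤ (i : ℕ) + (j : ℕ) → F i j = none) ∧
  (∀ i : Fin n, diagRow n F i ≠ none) ∧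
  (∀ i j : Fin n, (i : ℕ) + (j : ℕ) < n - 1 →
    (ForcedEmpty n F i j → F i j = none) ∧
    (¬ ForcedEmpty n F i j →
      match diagRow n F i, diagCol n F j with
      | some MSym.a, some MSym.b => F i j = some MSym.a ∨ F i j = some MSym.b
      | some MSym.a, some MSym.x => F i j = some MSym.b
      | some MSym.x, some MSym.b => F i j = some MSym.a
      | _, _ => F i j = none))

def symToLetter : Option MSym → Letter
  | some MSym.a => Letter.D
  | some MSym.b => Letter.E
  | _ => Letter.A

/-- The type of a tableau: the word in {D, E, A} read off the diagonal from top to bottom. -/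
def typeWord (n : ℕ) (F : Fin n → Fin n → Option MSym) : List Letter :=
  List.ofFn fun i : Fin n => symToLetter (diagRow n F i)

def countSym (n : ℕ) (F : Fin n → Fin n → Option MSym) (s : MSym) : ℕ :=
  (Finset.univ.filter fun p : Fin n × Fin n => F p.1 p.2 = some s).card

/-- The weight of a tableau: the product of all its α's and β's. -/
noncomputable def wt (n : ℕ) (α β : ℝ) (F : Fin n → Fin n → Option MSym) : ℝ :=
  α ^ countSym n F MSym.a * β ^ countSym n F MSym.b

/-- The weight generating function of a word: the sum of the weights over all
multi-Catalan tableaux of that type. -/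
noncomputable def wordWeight (α β : ℝ) (X : List Letter) : ℝ :=
  ∑ᶠ T : {F : Fin X.length → Fin X.length → Option MSym //
      IsMCT X.length F ∧ typeWord X.length F = X}, wt X.length α β T.1

namespace Finset

variable {α : Type*}

theorem card_filter_univ_eq_ite [Fintype α] {P : α → Prop} [DecidablePred P]
    {a : α} (h : ∀ x, P x → x = a) : #(univ.filter P) = if P a then 1 else 0 := by
  split_ifs with ha
  · exact card_eq_one.2 ⟨a, eq_singleton_iff_unique_mem.2
      ⟨mem_filter.2 ⟨mem_univ a, ha⟩, fun x hx => h x (mem_filter.1 hx).2⟩⟩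
  · exact card_eq_zero.2 (filter_eq_empty_iff.2 fun x _ hx => ha (h x hx ▸ hx))

theorem exists_card_filter_le_eq [LinearOrder α] (s : Finset α) {k : ℕ}
    (hk0 : 0 < k) (hk : k ≤ #s) : ∃ q ∈ s, #(s.filter (· ≤ q)) = k := by
  induction s using Finset.induction_on_max generalizing k with
  | empty => simp at hk; omega
  | insert a s hlt ih =>
    have ha : a ∉ s := fun h => lt_irrefl a (hlt a h)
    rw [card_insert_of_notMem ha] at hk
    rcases hk.lt_or_eq with hk | rfl
    · obtain ⟨q, hq, hcard⟩ := ih hk0 (by omega)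
      refine ⟨q, mem_insert_of_mem hq, ?_⟩
      rwa [filter_insert, if_neg (hlt q hq).not_ge]
    · refine ⟨a, mem_insert_self a s, ?_⟩
      rw [filter_true_of_mem fun x hx => ?_, card_insert_of_notMem ha]
      rcases mem_insert.1 hx with rfl | hx
      exacts [le_rfl, (hlt x hx).le]

end Finset

namespace MultiCatalan

open Finset

open scoped Classical

instance : Fintype MSym := ⟨{.a, .b, .x}, fun s => by cases s <;> simp⟩

abbrev Grid (n : ℕ) := Fin n → Fin n → Option MSym

/-- The content `v` allowed by `IsMCT` in a box that is not forced empty, where `d` and `c` are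
the diagonal letters of its row and of its column. -/
def Allowed (d c v : Option MSym) : Prop :=
  match d, c with
  | some .a, some .b => v = some .a ∨ v = some .b
  | some .a, some .x => v = some .b
  | some .x, some .b => v = some .a
  | _, _ => v = none

def CellOK (n : ℕ) (F : Grid n) (i j : Fin n) : Prop :=
  (ForcedEmpty n F i j → F i j = none) ∧
    (¬ ForcedEmpty n F i j → Allowed (diagRow n F i) (diagCol n F j) (F i j))

theorem isMCT_iff {n : ℕ} (F : Grid n) : IsMCT n F ↔
    (∀ i j : Fin n, n ≤ (i : ℕ) + j → F i j = none) ∧ (∀ i, diagRow n F i ≠ none) ∧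
      ∀ i j : Fin n, (i : ℕ) + j < n - 1 → CellOK n F i j :=
  Iff.rfl

section Grid

variable {n : ℕ}

theorem apply_eq_of_val_eq (F : Grid n) {i i' j j' : Fin n} (hi : (i : ℕ) = i')
    (hj : (j : ℕ) = j') : F i j = F i' j' := by
  rw [Fin.ext hi, Fin.ext hj]

theorem apply_eq_diagRow (F : Grid n) {i j : Fin n} (h : (i : ℕ) + j = n - 1) :
    F i j = diagRow n F i :=
  apply_eq_of_val_eq F rfl (show (j : ℕ) = n - 1 - i by omega)

theorem apply_eq_diagCol (F : Grid n) {i j : Fin n} (h : (i : ℕ) + j = n - 1) :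
    F i j = diagCol n F j :=
  apply_eq_of_val_eq F (show (i : ℕ) = n - 1 - j by omega) rfl

/-- The grid of size `n + 1` with top row `t` on top of `F`; its last column is empty below
the top row. -/
def addRow (F : Grid n) (t : Fin (n + 1) → Option MSym) : Grid (n + 1) :=
  Fin.cons t fun i => Fin.snoc (α := fun _ => Option MSym) (F i) none

def lower (F : Grid (n + 1)) : Grid n := fun i j => F i.succ j.castSucc

variable (F : Grid n) (t : Fin (n + 1) → Option MSym)

@[simp] theorem addRow_zero : addRow F t 0 = t := rfl

@[simp] theorem addRow_succ_castSucc (i j : Fin n) : addRow F t i.succ j.castSucc = F i j := by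
  simp [addRow]

@[simp] theorem addRow_succ_last (i : Fin n) : addRow F t i.succ (Fin.last n) = none := by
  simp [addRow]

@[simp] theorem lower_addRow : lower (addRow F t) = F := by
  funext i j; simp [lower]

theorem addRow_lower {G : Grid (n + 1)} (h : IsMCT (n + 1) G) : addRow (lower G) (G 0) = G := by
  funext i j
  induction i using Fin.cases with
  | zero => rfl
  | succ i =>
    induction j using Fin.lastCases with
    | last => rw [addRow_succ_last]; exact (h.1 i.succ (Fin.last n) (by simp)).symm
    | cast j => simp [lower]

@[simp] theorem diagRow_addRow_zero : diagRow (n + 1) (addRow F t) 0 = t (Fin.last n) :=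
  congrArg t (Fin.ext (by simp))

@[simp] theorem diagRow_addRow_succ (i : Fin n) :
    diagRow (n + 1) (addRow F t) i.succ = diagRow n F i := by
  have hi := i.isLt
  have : (⟨n + 1 - 1 - i.succ, by omega⟩ : Fin (n + 1)) =
      Fin.castSucc ⟨n - 1 - i, by omega⟩ :=
    Fin.ext (by simp; omega)
  rw [diagRow, this, addRow_succ_castSucc, diagRow]

@[simp] theorem diagCol_addRow_castSucc (j : Fin n) :
    diagCol (n + 1) (addRow F t) j.castSucc = diagCol n F j := by
  have hj := j.isLt
  have : (⟨n + 1 - 1 - j.castSucc, by omega⟩ : Fin (n + 1)) =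
      Fin.succ ⟨n - 1 - j, by omega⟩ :=
    Fin.ext (by simp; omega)
  rw [diagCol, this, addRow_succ_castSucc, diagCol]

@[simp] theorem diagCol_addRow_last :
    diagCol (n + 1) (addRow F t) (Fin.last n) = t (Fin.last n) := by
  rw [diagCol, ← diagRow_addRow_zero F t, diagRow]
  exact apply_eq_of_val_eq _ (by simp) (by simp)

end Grid

section Rows

variable {n : ℕ} (F : Grid n) (t : Fin (n + 1) → Option MSym)

def ColHasAlpha (j : Fin n) : Prop := ∃ i, F i j = some .a

def RowForced (j : Fin n) : Prop := (∃ j', j.castSucc < j' ∧ t j' = some .b) ∨ ColHasAlpha F j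

/-- The conditions that `IsMCT` imposes on the top row `t` of `addRow F t`. -/
def RowOK : Prop :=
  t (Fin.last n) ≠ none ∧ ∀ j : Fin n,
    (RowForced F t j → t j.castSucc = none) ∧
      (¬ RowForced F t j → Allowed (t (Fin.last n)) (diagCol n F j) (t j.castSucc))

theorem forcedEmpty_addRow_zero (j : Fin n) :
    ForcedEmpty (n + 1) (addRow F t) 0 j.castSucc ↔ RowForced F t j := by
  simp [ForcedEmpty, RowForced, ColHasAlpha, Fin.exists_fin_succ, Fin.succ_pos]

theorem forcedEmpty_addRow_succ (i j : Fin n) :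
    ForcedEmpty (n + 1) (addRow F t) i.succ j.castSucc ↔ ForcedEmpty n F i j := by
  refine or_congr ?_ ?_
  · rw [Fin.exists_fin_succ']; simp
  · rw [Fin.exists_fin_succ]; simp

theorem cellOK_addRow_zero (j : Fin n) : CellOK (n + 1) (addRow F t) 0 j.castSucc ↔
    (RowForced F t j → t j.castSucc = none) ∧
      (¬ RowForced F t j → Allowed (t (Fin.last n)) (diagCol n F j) (t j.castSucc)) := by
  simp [CellOK, forcedEmpty_addRow_zero]

theorem cellOK_addRow_succ (i j : Fin n) :
    CellOK (n + 1) (addRow F t) i.succ j.castSucc ↔ CellOK n F i j := by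
  simp [CellOK, forcedEmpty_addRow_succ]

theorem isMCT_addRow_iff : IsMCT (n + 1) (addRow F t) ↔ IsMCT n F ∧ RowOK F t := by
  have below : (∀ i j : Fin (n + 1), n + 1 ≤ (i : ℕ) + j → addRow F t i j = none) ↔
      ∀ i j : Fin n, n ≤ (i : ℕ) + j → F i j = none := by
    refine ⟨fun h i j hij => by simpa using h i.succ j.castSucc (by simp; omega),
      fun h i j hij => ?_⟩
    induction i using Fin.cases with
    | zero => exact absurd hij (by simpa using j.is_le)
    | succ i =>
      induction j using Fin.lastCases with
      | last => simp
      | cast j => simpa using h i j (by simp at hij; omega)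
  have diag : (∀ i, diagRow (n + 1) (addRow F t) i ≠ none) ↔
      t (Fin.last n) ≠ none ∧ ∀ i, diagRow n F i ≠ none := by
    simp [Fin.forall_fin_succ]
  have cells :
      (∀ i j : Fin (n + 1), (i : ℕ) + j < n + 1 - 1 → CellOK (n + 1) (addRow F t) i j) ↔
      (∀ j, (RowForced F t j → t j.castSucc = none) ∧
        (¬ RowForced F t j → Allowed (t (Fin.last n)) (diagCol n F j) (t j.castSucc))) ∧
      ∀ i j : Fin n, (i : ℕ) + j < n - 1 → CellOK n F i j := by
    rw [Fin.forall_fin_succ]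
    refine and_congr ?_ (forall_congr' fun i => ?_) <;> rw [Fin.forall_fin_succ'] <;> simp
    · simp only [cellOK_addRow_zero]
    · simp only [cellOK_addRow_succ]
      exact forall_congr' fun j => imp_congr_left (by omega)
  rw [isMCT_iff, isMCT_iff, below, diag, cells, RowOK]
  tauto

end Rows

section Statistics

variable {n : ℕ}

noncomputable def openCols (F : Grid n) : Finset (Fin n) :=
  univ.filter fun j => diagCol n F j = some .b ∧ ¬ ColHasAlpha F j

noncomputable def numOpen (F : Grid n) : ℕ := #(openCols F)

def numA (F : Grid n) : ℕ := (typeWord n F).count .A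

theorem numOpen_le (F : Grid n) : numOpen F ≤ n :=
  (card_le_univ _).trans_eq (Fintype.card_fin n)

theorem mem_openCols_iff {F : Grid n} {j : Fin n} (hj : ¬ ColHasAlpha F j) :
    j ∈ openCols F ↔ diagCol n F j = some .b := by
  simp [openCols, hj]

theorem notMem_openCols {F : Grid n} {j : Fin n} (hj : ColHasAlpha F j) : j ∉ openCols F :=
  fun hmem => (mem_filter.mp hmem).2.2 hj

variable (F : Grid n) (t : Fin (n + 1) → Option MSym)

theorem typeWord_addRow :
    typeWord (n + 1) (addRow F t) = symToLetter (t (Fin.last n)) :: typeWord n F := by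
  simp [typeWord, List.ofFn_succ]

theorem numA_addRow :
    numA (addRow F t) = numA F + if symToLetter (t (Fin.last n)) = .A then 1 else 0 := by
  simp [numA, typeWord_addRow, List.count_cons]

theorem colHasAlpha_addRow_castSucc (j : Fin n) :
    ColHasAlpha (addRow F t) j.castSucc ↔ t j.castSucc = some .a ∨ ColHasAlpha F j := by
  simp [ColHasAlpha, Fin.exists_fin_succ]

theorem colHasAlpha_addRow_last :
    ColHasAlpha (addRow F t) (Fin.last n) ↔ t (Fin.last n) = some .a := by
  simp [ColHasAlpha, Fin.exists_fin_succ]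

theorem numOpen_addRow : numOpen (addRow F t) =
    #((openCols F).filter fun j => t j.castSucc ≠ some .a) +
      if t (Fin.last n) = some .b then 1 else 0 := by
  rw [numOpen, openCols, card_filter, Fin.sum_univ_castSucc, openCols, filter_filter, card_filter]
  congr 1
  · refine sum_congr rfl fun j _ => ?_
    simp only [diagCol_addRow_castSucc, colHasAlpha_addRow_castSucc]
    exact if_congr (by tauto) rfl rfl
  · simp only [diagCol_addRow_last, colHasAlpha_addRow_last]
    refine if_congr ?_ rfl rfl
    rcases t (Fin.last n) with _ | _ | _ | _ <;> simp

end Statistics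

section Allowed

variable {d c v : Option MSym}

theorem allowed_x_iff : Allowed (some .x) c v ↔ v = if c = some .b then some .a else none := by
  rcases c with _ | _ | _ | _ <;> simp [Allowed]

theorem not_allowed_x_b : ¬ Allowed (some .x) c (some .b) := by
  rcases c with _ | _ | _ | _ <;> simp [Allowed]

theorem allowed_a_iff_of_ne_b (hv : v ≠ some .b) :
    Allowed (some .a) c v ↔ c ≠ some .x ∧ v = if c = some .b then some .a else none := by
  rcases c with _ | _ | _ | _ <;> simp [Allowed, hv]

theorem allowed_a_b_iff : Allowed (some .a) c (some .b) ↔ c = some .b ∨ c = some .x := by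
  rcases c with _ | _ | _ | _ <;> simp [Allowed]

theorem ne_a_of_allowed_x (h : Allowed d (some .x) v) : v ≠ some .a := by
  rcases d with _ | _ | _ | _ <;> simp_all [Allowed]

end Allowed

section Shape

variable {n : ℕ} {F : Grid n}

theorem eq_none_or_diag_or_allowed (h : IsMCT n F) (i j : Fin n) :
    F i j = none ∨ (F i j = diagRow n F i ∧ F i j = diagCol n F j) ∨
      Allowed (diagRow n F i) (diagCol n F j) (F i j) := by
  rcases lt_trichotomy ((i : ℕ) + j) (n - 1) with hlt | heq | hgt
  · by_cases hf : ForcedEmpty n F i j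
    · exact Or.inl ((h.2.2 i j hlt).1 hf)
    · exact Or.inr (Or.inr ((h.2.2 i j hlt).2 hf))
  · exact Or.inr (Or.inl ⟨apply_eq_diagRow F heq, apply_eq_diagCol F heq⟩)
  · exact Or.inl (h.1 i j (by omega))

theorem apply_ne_b_of_diagRow_eq_x (h : IsMCT n F) {i : Fin n} (hx : diagRow n F i = some .x)
    (j : Fin n) : F i j ≠ some .b := by
  intro hb
  rcases eq_none_or_diag_or_allowed h i j with h0 | ⟨hd, -⟩ | ha
  · simp [hb] at h0
  · simp [hb, hx] at hd
  · rw [hx, hb] at ha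
    exact not_allowed_x_b ha

theorem apply_ne_a_of_diagCol_eq_x (h : IsMCT n F) {j : Fin n} (hx : diagCol n F j = some .x)
    (i : Fin n) : F i j ≠ some .a := by
  intro ha
  rcases eq_none_or_diag_or_allowed h i j with h0 | ⟨-, hd⟩ | hA
  · simp [ha] at h0
  · simp [ha, hx] at hd
  · rw [hx] at hA
    exact ne_a_of_allowed_x hA ha

/-- Since an `x`-row carries no `β`, any box of it above an open column must hold an `α`. -/
theorem lt_of_diagCol_eq_x (h : IsMCT n F) {j q : Fin n} (hj : diagCol n F j = some .x)
    (hq : q ∈ openCols F) : j < q := by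
  obtain ⟨hqb, hqa⟩ := (mem_filter.mp hq).2
  by_contra hle
  rcases (not_lt.mp hle).lt_or_eq with hlt | rfl
  · have hjn := j.isLt
    set i : Fin n := ⟨n - 1 - j, by omega⟩
    have hdiag : (i : ℕ) + j = n - 1 := by simp [i]; omega
    have hix : diagRow n F i = some .x := by
      rw [← apply_eq_diagRow F hdiag, apply_eq_diagCol F hdiag, hj]
    have hnf : ¬ ForcedEmpty n F i q := by
      rintro (⟨j', -, hb⟩ | ⟨i', -, ha⟩)
      · exact apply_ne_b_of_diagRow_eq_x h hix j' hb
      · exact hqa ⟨i', ha⟩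
    have hA := (h.2.2 i q (by simp [i]; omega)).2 hnf
    rw [hix, hqb] at hA
    exact hqa ⟨i, hA⟩
  · simp [hqb] at hj

end Shape

section TopRows

variable {n : ℕ} {F : Grid n} {t : Fin (n + 1) → Option MSym}

def rowB (n : ℕ) : Fin (n + 1) → Option MSym :=
  Fin.snoc (α := fun _ => Option MSym) (fun _ => none) (some .b)

noncomputable def topRow (F : Grid n) (d : MSym) (p : Option (Fin n)) :
    Fin (n + 1) → Option MSym :=
  Fin.snoc (α := fun _ => Option MSym)
    (fun j => if p = some j then some .b
      else if (∀ q ∈ p, q < j) ∧ j ∈ openCols F then some .a else none) (some d)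

/-- The admissible positions of the `β` in a top row with diagonal letter `α`. -/
def IsBetaSpot (F : Grid n) (p : Option (Fin n)) : Prop :=
  (∀ j, (∀ q ∈ p, q < j) → diagCol n F j ≠ some .x) ∧
    ∀ q ∈ p, q ∈ openCols F ∨ diagCol n F q = some .x

@[simp] theorem rowB_last : rowB n (Fin.last n) = some .b := by simp [rowB]

@[simp] theorem rowB_castSucc (j : Fin n) : rowB n j.castSucc = none := by simp [rowB]

@[simp] theorem topRow_last (d : MSym) (p : Option (Fin n)) :
    topRow F d p (Fin.last n) = some d := by simp [topRow]

theorem topRow_castSucc (d : MSym) (p : Option (Fin n)) (j : Fin n) :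
    topRow F d p j.castSucc = if p = some j then some .b
      else if (∀ q ∈ p, q < j) ∧ j ∈ openCols F then some .a else none := by
  simp [topRow]

theorem topRow_castSucc_eq_b_iff (d : MSym) (p : Option (Fin n)) (j : Fin n) :
    topRow F d p j.castSucc = some .b ↔ p = some j := by
  rw [topRow_castSucc]; split_ifs <;> simp_all

theorem allowed_iff_of_not_colHasAlpha {d : MSym} {j : Fin n} {v : Option MSym}
    (hd : d = .x ∨ d = .a) (hj : ¬ ColHasAlpha F j) (hv : v ≠ some .b) :
    Allowed (some d) (diagCol n F j) v ↔
      (d = .a → diagCol n F j ≠ some .x) ∧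
        v = if j ∈ openCols F then some .a else none := by
  simp only [mem_openCols_iff hj]
  rcases hd with rfl | rfl
  · simp [allowed_x_iff]
  · simp [allowed_a_iff_of_ne_b hv]

theorem rowForced_iff {p : Option (Fin n)} (hlast : t (Fin.last n) ≠ some .b)
    (hp : ∀ j, t j.castSucc = some .b ↔ p = some j) (j : Fin n) :
    RowForced F t j ↔ (∃ q ∈ p, j < q) ∨ ColHasAlpha F j := by
  simp [RowForced, Fin.exists_fin_succ', hlast, hp, and_comm]

theorem rowOK_and_eq_b_iff : RowOK F t ∧ t (Fin.last n) = some .b ↔ t = rowB n := by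
  have forced : ∀ j : Fin n, t (Fin.last n) = some .b → RowForced F t j :=
    fun j hb => Or.inl ⟨Fin.last n, Fin.castSucc_lt_last j, hb⟩
  constructor
  · rintro ⟨⟨-, ht⟩, hb⟩
    funext j
    induction j using Fin.lastCases with
    | last => simp [hb]
    | cast j => rw [rowB_castSucc]; exact (ht j).1 (forced j hb)
  · rintro rfl
    refine ⟨⟨by simp, fun j => ⟨fun _ => by simp, fun hf => ?_⟩⟩, by simp⟩
    exact absurd (forced j (by simp)) hf

theorem rowOK_topRow_x : RowOK F (topRow F .x none) := by
  refine ⟨by simp, fun j => ?_⟩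
  rw [rowForced_iff (by simp) (topRow_castSucc_eq_b_iff _ _), topRow_castSucc]
  by_cases hj : ColHasAlpha F j
  · simp [hj, notMem_openCols hj]
  · simp only [hj, reduceCtorEq, if_false]
    simpa using (allowed_iff_of_not_colHasAlpha (Or.inl rfl) hj (by split_ifs <;> simp)).2
      ⟨by simp, rfl⟩

theorem eq_topRow_x (ht : RowOK F t) (hx : t (Fin.last n) = some .x) : t = topRow F .x none := by
  have hnb : ∀ j : Fin n, t j.castSucc ≠ some .b := by
    intro j hb
    by_cases hf : RowForced F t j
    · simp [(ht.2 j).1 hf] at hb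
    · have hA := (ht.2 j).2 hf
      rw [hx, hb] at hA
      exact not_allowed_x_b hA
  have hforced := rowForced_iff (F := F) (t := t) (p := none) (by simp [hx]) (by simpa using hnb)
  funext j
  induction j using Fin.lastCases with
  | last => simp [hx]
  | cast j =>
    rw [topRow_castSucc]
    by_cases hj : ColHasAlpha F j
    · simp [(ht.2 j).1 ((hforced j).2 (Or.inr hj)), notMem_openCols hj]
    · have hA := (ht.2 j).2 (by simpa [hforced] using hj)
      rw [hx, allowed_iff_of_not_colHasAlpha (Or.inl rfl) hj (hnb j)] at hA
      simpa using hA.2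

theorem rowOK_topRow_a (h : IsMCT n F) {p : Option (Fin n)} (hp : IsBetaSpot F p) :
    RowOK F (topRow F .a p) := by
  refine ⟨by simp, fun j => ?_⟩
  rw [rowForced_iff (by simp) (topRow_castSucc_eq_b_iff _ _), topRow_castSucc, topRow_last]
  constructor
  · rintro (⟨q, rfl, hjq⟩ | hj)
    · simp [hjq.ne', hjq.not_gt]
    · have hpj : p ≠ some j := by
        rintro rfl
        rcases hp.2 j rfl with ho | hx
        · exact notMem_openCols hj ho
        · obtain ⟨i, hi⟩ := hj
          exact apply_ne_a_of_diagCol_eq_x h hx i hi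
      simp [hpj, notMem_openCols hj]
  · intro hnf
    push Not at hnf
    obtain ⟨hbefore, hj⟩ := hnf
    by_cases hpj : p = some j
    · subst hpj
      simp only [if_true]
      refine allowed_a_b_iff.2 ((hp.2 j rfl).imp_left (mem_openCols_iff hj).1)
    · have hlt : ∀ q ∈ p, q < j := fun q hq =>
        (hbefore q hq).lt_of_ne fun e => hpj (e ▸ hq)
      simp only [hpj, if_false, and_iff_right hlt]
      exact (allowed_iff_of_not_colHasAlpha (Or.inr rfl) hj (by split_ifs <;> simp)).2
        ⟨fun _ => hp.1 j hlt, rfl⟩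

/-- A `β` empties every box to its left, so a top row holds at most one `β`. -/
theorem exists_betaPos (ht : RowOK F t) :
    ∃ p : Option (Fin n), ∀ j : Fin n, t j.castSucc = some .b ↔ p = some j := by
  by_cases hb : ∃ j : Fin n, t j.castSucc = some .b
  · obtain ⟨q, hq⟩ := hb
    have left_empty : ∀ j, j < q → t j.castSucc = none := fun j hjq =>
      (ht.2 j).1 (Or.inl ⟨q.castSucc, Fin.castSucc_lt_castSucc_iff.2 hjq, hq⟩)
    refine ⟨some q, fun j => ⟨fun hj => ?_, fun hj => Option.some_injective _ hj ▸ hq⟩⟩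
    rcases lt_trichotomy j q with hjq | rfl | hqj
    · simp [left_empty j hjq] at hj
    · rfl
    · simp [(ht.2 q).1 (Or.inl ⟨j.castSucc, Fin.castSucc_lt_castSucc_iff.2 hqj, hj⟩)] at hq
  · push Not at hb
    exact ⟨none, by simpa using hb⟩

theorem exists_isBetaSpot_eq_topRow (h : IsMCT n F) (ht : RowOK F t)
    (ha : t (Fin.last n) = some .a) : ∃ p, IsBetaSpot F p ∧ t = topRow F .a p := by
  obtain ⟨p, hp⟩ := exists_betaPos ht
  have hforced := rowForced_iff (F := F) (by simp [ha]) hp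
  have beyond : ∀ j, (∀ q ∈ p, q < j) → diagCol n F j ≠ some .x ∧
      t j.castSucc = if j ∈ openCols F then some .a else none := by
    intro j hj
    have hjb : t j.castSucc ≠ some .b := fun hb => lt_irrefl j (hj j ((hp j).1 hb))
    by_cases hα : ColHasAlpha F j
    · refine ⟨fun hx => ?_, ?_⟩
      · obtain ⟨i, hi⟩ := hα
        exact apply_ne_a_of_diagCol_eq_x h hx i hi
      · rw [(ht.2 j).1 ((hforced j).2 (Or.inr hα)), if_neg (notMem_openCols hα)]
    · have hA := (ht.2 j).2 (by
        rw [hforced]; push Not; exact ⟨fun q hq => (hj q hq).le, hα⟩)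
      rw [ha, allowed_iff_of_not_colHasAlpha (Or.inr rfl) hα hjb] at hA
      exact ⟨hA.1 rfl, hA.2⟩
  have spot : ∀ q ∈ p, q ∈ openCols F ∨ diagCol n F q = some .x := by
    intro q hq
    have hqb := (hp q).2 hq
    have hnf : ¬ RowForced F t q := fun hf => by simp [(ht.2 q).1 hf] at hqb
    have hα : ¬ ColHasAlpha F q := fun hα => hnf ((hforced q).2 (Or.inr hα))
    have hA := (ht.2 q).2 hnf
    rw [ha, hqb, allowed_a_b_iff] at hA
    exact hA.imp_left (mem_openCols_iff hα).2
  refine ⟨p, ⟨fun j hj => (beyond j hj).1, spot⟩, ?_⟩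
  funext j
  induction j using Fin.lastCases with
  | last => simp [ha]
  | cast j =>
    rw [topRow_castSucc]
    split_ifs with hpj hlt
    · exact (hp j).2 hpj
    · exact (beyond j hlt.1).2.trans (if_pos hlt.2)
    · by_cases hb : ∀ q ∈ p, q < j
      · rw [(beyond j hb).2, if_neg fun ho => hlt ⟨hb, ho⟩]
      · push Not at hb
        obtain ⟨q, hq, hjq⟩ := hb
        refine (ht.2 j).1 ((hforced j).2 (Or.inl ⟨q, hq, hjq.lt_of_ne ?_⟩))
        rintro rfl
        exact hpj hq

end TopRows

section BetaStat

variable {n : ℕ} {F : Grid n}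

noncomputable def betaStat (F : Grid n) (p : Option (Fin n)) : ℕ :=
  #((openCols F).filter fun j => ∃ q ∈ p, j ≤ q)

theorem numOpen_addRow_topRow {d : MSym} (hd : d ≠ .b) (p : Option (Fin n)) :
    numOpen (addRow F (topRow F d p)) = betaStat F p := by
  rw [numOpen_addRow, topRow_last, if_neg (by simpa using hd), add_zero, betaStat]
  refine congrArg card (filter_congr fun j hj => ?_)
  rw [topRow_castSucc]
  cases p with
  | none => simp [hj]
  | some q =>
    rcases lt_trichotomy q j with hqj | rfl | hjq
    · simp [hqj, hqj.ne, hqj.not_ge, hj]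
    · simp
    · simp [hjq.ne', hjq.not_gt, hjq.le]

theorem betaStat_le (p : Option (Fin n)) : betaStat F p ≤ numOpen F :=
  card_filter_le _ _

/-- Along the chain of admissible `β` positions, every step to the right passes one more open
column. -/
theorem betaStat_lt {p : Option (Fin n)} {q' : Fin n} (hp : IsBetaSpot F p)
    (hq' : IsBetaSpot F (some q')) (hlt : ∀ q ∈ p, q < q') :
    betaStat F p < betaStat F (some q') := by
  have ho : q' ∈ openCols F := (hq'.2 q' rfl).resolve_right (hp.1 q' hlt)
  refine card_lt_card ⟨fun j hj => ?_, fun hsub => ?_⟩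
  · obtain ⟨hjo, q, hq, hjq⟩ := mem_filter.1 hj
    exact mem_filter.2 ⟨hjo, q', rfl, hjq.trans (hlt q hq).le⟩
  · obtain ⟨-, q, hq, hq'q⟩ := mem_filter.1 (hsub (mem_filter.2 ⟨ho, q', rfl, le_rfl⟩))
    exact (hlt q hq).not_ge hq'q

theorem eq_of_betaStat_eq {p p' : Option (Fin n)} (hp : IsBetaSpot F p) (hp' : IsBetaSpot F p')
    (he : betaStat F p = betaStat F p') : p = p' := by
  cases p with
  | none =>
    cases p' with
    | none => rfl
    | some q' => exact absurd he (betaStat_lt hp hp' (by simp)).ne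
  | some q =>
    cases p' with
    | none => exact absurd he (betaStat_lt hp' hp (by simp)).ne'
    | some q' =>
      rcases lt_trichotomy q q' with hlt | rfl | hlt
      · exact absurd he (betaStat_lt hp hp' (by simpa using hlt)).ne
      · rfl
      · exact absurd he (betaStat_lt hp' hp (by simpa using hlt)).ne'

theorem exists_isBetaSpot_betaStat_eq (h : IsMCT n F) {m : ℕ} (hm : m ≤ numOpen F) :
    ∃ p, IsBetaSpot F p ∧ betaStat F p = m := by
  -- the `β` goes to the `m`-th open column, or for `m = 0` to the rightmost `x`-column, if any
  rcases Nat.eq_zero_or_pos m with rfl | hm0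
  · by_cases hx : ∃ j, diagCol n F j = some .x
    · obtain ⟨q, hq, hmax⟩ :=
        (univ.filter fun j => diagCol n F j = some .x).exists_max_image id
          (by simpa [Finset.Nonempty] using hx)
      have hqx : diagCol n F q = some .x := (mem_filter.1 hq).2
      refine ⟨some q, ⟨fun j hj hjx => ?_, fun _ hq' => ?_⟩, ?_⟩
      · exact (hj q rfl).not_ge (hmax j (mem_filter.2 ⟨mem_univ j, hjx⟩))
      · rw [Option.mem_some_iff.1 hq'] at hqx
        exact Or.inr hqx
      · refine card_eq_zero.2 (filter_eq_empty_iff.2 fun j hj => ?_)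
        rintro ⟨_, hq', hjq⟩
        rw [← Option.mem_some_iff.1 hq'] at hjq
        exact (lt_of_diagCol_eq_x h hqx hj).not_ge hjq
    · push Not at hx
      exact ⟨none, ⟨fun j _ => hx j, by simp⟩, by simp [betaStat]⟩
  · obtain ⟨q, hq, hcard⟩ := exists_card_filter_le_eq (openCols F) hm0 hm
    refine ⟨some q, ⟨fun j hj hjx => (lt_of_diagCol_eq_x h hjx hq).not_gt (hj q rfl),
      fun _ hq' => by rw [Option.mem_some_iff.1 hq'] at hq; exact Or.inl hq⟩, ?_⟩
    simpa [betaStat] using hcard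

end BetaStat

section Counting

variable {n : ℕ}

noncomputable def tableaux (n : ℕ) : Finset (Grid n) := univ.filter (IsMCT n)

@[simp] theorem mem_tableaux {F : Grid n} : F ∈ tableaux n ↔ IsMCT n F := by
  simp [tableaux]

theorem isMCT_lower {G : Grid (n + 1)} (hG : IsMCT (n + 1) G) : IsMCT n (lower G) :=
  ((isMCT_addRow_iff _ _).1 ((addRow_lower hG).symm ▸ hG)).1

theorem card_filter_tableaux_succ (P : Grid (n + 1) → Prop) [DecidablePred P] :
    #((tableaux (n + 1)).filter P) =
      ∑ F ∈ tableaux n, #(univ.filter fun t => RowOK F t ∧ P (addRow F t)) := by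
  rw [card_eq_sum_card_fiberwise (f := lower) (t := tableaux n) fun G hG => by
    simp only [mem_coe, mem_filter, mem_tableaux] at hG ⊢
    exact isMCT_lower hG.1]
  refine sum_congr rfl fun F hF => card_nbij' (fun G => G 0) (addRow F) ?_ ?_ ?_ ?_
  · intro G hG
    simp only [mem_coe, mem_filter, mem_tableaux, mem_univ, true_and] at hG ⊢
    obtain ⟨⟨hG, hP⟩, rfl⟩ := hG
    refine ⟨((isMCT_addRow_iff _ _).1 ((addRow_lower hG).symm ▸ hG)).2, ?_⟩
    rwa [addRow_lower hG]
  · intro t ht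
    simp only [mem_coe, mem_filter, mem_tableaux, mem_univ, true_and] at hF ht ⊢
    exact ⟨⟨(isMCT_addRow_iff F t).2 ⟨hF, ht.1⟩, ht.2⟩, lower_addRow F t⟩
  · intro G hG
    simp only [mem_coe, mem_filter, mem_tableaux] at hG
    obtain ⟨⟨hG, -⟩, rfl⟩ := hG
    exact addRow_lower hG
  · intro t _
    rfl

end Counting

section RowCount

variable {n : ℕ} {F : Grid n}

theorem numA_addRow_rowB : numA (addRow F (rowB n)) = numA F := by
  simp [numA_addRow, symToLetter]

theorem numOpen_addRow_rowB : numOpen (addRow F (rowB n)) = numOpen F + 1 := by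
  rw [numOpen_addRow]
  simp [numOpen]

theorem numA_addRow_topRow (d : MSym) (p : Option (Fin n)) :
    numA (addRow F (topRow F d p)) = numA F + if d = .x then 1 else 0 := by
  cases d <;> simp [numA_addRow, symToLetter]

theorem betaStat_none : betaStat F none = 0 := by
  simp [betaStat]

theorem card_rowOK_b (r m : ℕ) :
    #(univ.filter fun t => (RowOK F t ∧ numA (addRow F t) = r ∧ numOpen (addRow F t) = m) ∧
      t (Fin.last n) = some .b) = if numA F = r ∧ numOpen F + 1 = m then 1 else 0 := by
  rw [card_filter_univ_eq_ite fun t ht => rowOK_and_eq_b_iff.1 ⟨ht.1.1, ht.2⟩]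
  simp [(rowOK_and_eq_b_iff.2 rfl).1, numA_addRow_rowB, numOpen_addRow_rowB]

theorem card_rowOK_x (r m : ℕ) :
    #(univ.filter fun t => (RowOK F t ∧ numA (addRow F t) = r ∧ numOpen (addRow F t) = m) ∧
      t (Fin.last n) = some .x) = if numA F + 1 = r ∧ 0 = m then 1 else 0 := by
  rw [card_filter_univ_eq_ite fun t ht => eq_topRow_x ht.1.1 ht.2]
  simp [rowOK_topRow_x, numA_addRow_topRow, numOpen_addRow_topRow, betaStat_none]

theorem card_rowOK_a (h : IsMCT n F) (r m : ℕ) :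
    #(univ.filter fun t => (RowOK F t ∧ numA (addRow F t) = r ∧ numOpen (addRow F t) = m) ∧
      t (Fin.last n) = some .a) = if numA F = r ∧ m ≤ numOpen F then 1 else 0 := by
  have stats : ∀ p, numA (addRow F (topRow F .a p)) = numA F ∧
      numOpen (addRow F (topRow F .a p)) = betaStat F p := fun p =>
    ⟨by simp [numA_addRow_topRow], numOpen_addRow_topRow (by simp) p⟩
  split_ifs with hc
  · obtain ⟨p, hp, hpm⟩ := exists_isBetaSpot_betaStat_eq h hc.2
    refine card_eq_one.2 ⟨topRow F .a p, eq_singleton_iff_unique_mem.2 ⟨?_, fun t ht => ?_⟩⟩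
    · simp [rowOK_topRow_a h hp, stats, hc.1, hpm]
    · obtain ⟨⟨hrow, -, hm⟩, ha⟩ := (mem_filter.1 ht).2
      obtain ⟨p', hp', rfl⟩ := exists_isBetaSpot_eq_topRow h hrow ha
      rw [eq_of_betaStat_eq hp' hp (by rw [hpm, ← (stats p').2, hm])]
  · refine card_eq_zero.2 (filter_eq_empty_iff.2 fun t _ ⟨⟨ht, hr, hm⟩, ha⟩ => hc ?_)
    obtain ⟨p, -, rfl⟩ := exists_isBetaSpot_eq_topRow h ht ha
    rw [(stats p).1] at hr
    rw [(stats p).2] at hm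
    exact ⟨hr, hm ▸ betaStat_le p⟩

theorem card_rowOK (h : IsMCT n F) (r m : ℕ) :
    #(univ.filter fun t => RowOK F t ∧ numA (addRow F t) = r ∧ numOpen (addRow F t) = m) =
      (if numA F = r ∧ numOpen F + 1 = m then 1 else 0) +
        (if numA F + 1 = r ∧ 0 = m then 1 else 0) +
        (if numA F = r ∧ m ≤ numOpen F then 1 else 0) := by
  rw [card_eq_sum_card_fiberwise (f := fun t => t (Fin.last n))
    (t := {some .b, some .x, some .a}) fun t ht => ?_]
  · rw [sum_insert (by simp), sum_insert (by simp), sum_singleton, ← add_assoc]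
    simp only [filter_filter]
    rw [card_rowOK_b, card_rowOK_x, card_rowOK_a h]
  · have hne := (mem_filter.1 ht).2.1.1
    simp only [coe_insert, coe_singleton, Set.mem_insert_iff, Set.mem_singleton_iff]
    rcases hd : t (Fin.last n) with _ | _ | _ | _ <;> simp_all

end RowCount

section Recursion

noncomputable def tabCount (n r m : ℕ) : ℕ :=
  #((tableaux n).filter fun F => numA F = r ∧ numOpen F = m)

noncomputable def tabCountGe (n r m : ℕ) : ℕ :=
  #((tableaux n).filter fun F => numA F = r ∧ m ≤ numOpen F)

variable {n : ℕ}

theorem tabCount_succ (r m : ℕ) : tabCount (n + 1) r m =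
    #((tableaux n).filter fun F => numA F = r ∧ numOpen F + 1 = m) +
      #((tableaux n).filter fun F => numA F + 1 = r ∧ 0 = m) + tabCountGe n r m := by
  rw [tabCount, card_filter_tableaux_succ,
    sum_congr rfl fun F hF => card_rowOK (mem_tableaux.1 hF) r m]
  simp only [sum_add_distrib, sum_boole, Nat.cast_id, tabCountGe]

theorem tabCount_succ_succ (r m : ℕ) :
    tabCount (n + 1) r (m + 1) = tabCount n r m + tabCountGe n r (m + 1) := by
  rw [tabCount_succ]
  simp [tabCount]

theorem tabCount_succ_zero_succ (r : ℕ) :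
    tabCount (n + 1) (r + 1) 0 = tabCountGe n r 0 + tabCountGe n (r + 1) 0 := by
  rw [tabCount_succ]
  simp [tabCountGe]

theorem tabCount_succ_zero_zero : tabCount (n + 1) 0 0 = tabCountGe n 0 0 := by
  rw [tabCount_succ]
  simp

theorem tabCountGe_eq_add (r m : ℕ) :
    tabCountGe n r m = tabCount n r m + tabCountGe n r (m + 1) := by
  rw [tabCountGe, ← card_filter_add_card_filter_not (p := fun F => numOpen F = m),
    filter_filter, filter_filter, tabCount, tabCountGe]
  congr 2 <;> refine filter_congr fun F _ => ?_ <;> omega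

theorem tabCountGe_of_lt {r m : ℕ} (h : n < m) : tabCountGe n r m = 0 :=
  card_eq_zero.2 (filter_eq_empty_iff.2 fun F _ hF => by
    have := numOpen_le F
    omega)

theorem tabCount_zero (r : ℕ) : tabCount 0 r 0 = if r = 0 then 1 else 0 := by
  have hall : ∀ F : Grid 0, IsMCT 0 F ∧ numA F = 0 ∧ numOpen F = 0 := fun F =>
    ⟨⟨fun i => i.elim0, fun i => i.elim0, fun i => i.elim0⟩, by simp [numA, typeWord],
      Nat.le_zero.1 (numOpen_le F)⟩
  have htab : tableaux 0 = univ := eq_univ_of_forall fun F => mem_tableaux.2 (hall F).1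
  split_ifs with hr
  · subst hr
    rw [tabCount, htab, filter_true_of_mem fun F _ => (hall F).2]
    simp
  · exact card_eq_zero.2 (filter_eq_empty_iff.2 fun F _ hF => hr (hF.1 ▸ (hall F).2.1))

end Recursion

theorem natCard_eq_tabCountGe (n r : ℕ) :
    Nat.card {F : Grid n // IsMCT n F ∧ (typeWord n F).count .A = r} = tabCountGe n r 0 := by
  rw [Nat.card_eq_fintype_card, Fintype.card_subtype, tabCountGe, tableaux, filter_filter]
  simp [numA]

section ClosedForm

def ballot (N k : ℕ) : ℤ := N.choose k - N.choose (k + 1)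

theorem ballot_succ_succ (N k : ℕ) : ballot (N + 1) (k + 1) = ballot N k + ballot N (k + 1) := by
  simp only [ballot, Nat.choose_succ_succ', Nat.cast_add]
  ring

theorem ballot_two_mul_add_one (n : ℕ) : ballot (2 * n + 1) n = 0 := by
  simp [ballot, Nat.choose_symm_half]

theorem ballot_of_lt {N k : ℕ} (h : N < k) : ballot N k = 0 := by
  simp [ballot, Nat.choose_eq_zero_of_lt h, Nat.choose_eq_zero_of_lt (h.trans k.lt_succ_self)]

theorem ballot_eq_mul_choose {N k : ℕ} (hk : k ≤ N) :
    (ballot N k : ℚ) = (2 * k + 1 - N) / (k + 1) * N.choose k := by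
  have h := congrArg (Nat.cast : ℕ → ℚ) (Nat.choose_succ_right_eq N k)
  push_cast [Nat.cast_sub hk] at h
  simp only [ballot, Int.cast_sub, Int.cast_natCast]
  field_simp
  linarith

variable {n : ℕ}

theorem tabCountGe_eq_ballot
    (hn : ∀ r m, m ≤ n → (tabCount n r m : ℤ) = ballot (2 * n - m) (n + r))
    (r m : ℕ) (hm : m ≤ n + 1) :
    (tabCountGe n r m : ℤ) = ballot (2 * n + 1 - m) (n + r + 1) := by
  induction hk : n + 1 - m generalizing m with
  | zero =>
    rw [tabCountGe_of_lt (by omega), ballot_of_lt (by omega)]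
    rfl
  | succ k ih =>
    rw [tabCountGe_eq_add, Nat.cast_add, hn r m (by omega), ih (m + 1) (by omega) (by omega),
      show 2 * n + 1 - m = 2 * n - m + 1 by omega, show 2 * n + 1 - (m + 1) = 2 * n - m by omega,
      ballot_succ_succ]

theorem tabCount_eq_ballot (n r m : ℕ) (hm : m ≤ n) :
    (tabCount n r m : ℤ) = ballot (2 * n - m) (n + r) := by
  induction n generalizing r m with
  | zero =>
    obtain rfl : m = 0 := by omega
    rw [tabCount_zero]
    cases r <;> simp [ballot]
  | succ n ih =>
    have hge := tabCountGe_eq_ballot ih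
    rcases m with _ | m
    · rcases r with _ | r
      · rw [tabCount_succ_zero_zero, hge 0 0 (by omega),
          show 2 * (n + 1) - 0 = 2 * n + 1 + 1 by omega,
          ballot_succ_succ, ballot_two_mul_add_one, zero_add]
        rfl
      · rw [tabCount_succ_zero_succ, Nat.cast_add, hge r 0 (by omega), hge (r + 1) 0 (by omega),
          show 2 * (n + 1) - 0 = 2 * n + 1 - 0 + 1 by omega,
          show n + 1 + (r + 1) = n + r + 1 + 1 by omega,
          show n + (r + 1) + 1 = n + r + 1 + 1 by omega, ballot_succ_succ]
    · rw [tabCount_succ_succ, Nat.cast_add, ih r m (by omega), hge r (m + 1) (by omega),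
        show 2 * (n + 1) - (m + 1) = 2 * n - m + 1 by omega, show n + 1 + r = n + r + 1 by omega,
        show 2 * n + 1 - (m + 1) = 2 * n - m by omega, ballot_succ_succ]

theorem tabCountGe_zero_eq_ballot (n r : ℕ) :
    (tabCountGe n r 0 : ℤ) = ballot (2 * n + 1) (n + r + 1) :=
  tabCountGe_eq_ballot (tabCount_eq_ballot n) r 0 (Nat.zero_le _)

end ClosedForm

end MultiCatalan

/-- The number of multi-Catalan tableaux of size `n` with `r` A's on the diagonal,
counted with α = β = 1, is (2(r+1)/(n+r+2)) * binom(2n+1, n-r). -/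
theorem multiCatalan_count (n r : ℕ) (hr : r ≤ n) :
    (Nat.card {F : Fin n → Fin n → Option MSym //
        IsMCT n F ∧ (typeWord n F).count Letter.A = r} : ℚ) =
      2 * (r + 1) / (n + r + 2) * Nat.choose (2 * n + 1) (n - r) := by
  rw [MultiCatalan.natCard_eq_tabCountGe, ← Int.cast_natCast,
    MultiCatalan.tabCountGe_zero_eq_ballot,
    MultiCatalan.ballot_eq_mul_choose (by omega),
    Nat.choose_symm_of_eq_add (show 2 * n + 1 = n + r + 1 + (n - r) by omega)]
  push_cast
  ring
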